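/- Let a ≠ 0, ω, μ be real parameters and let u₁, u₂, v₁, v₂ be real numbers with f(v₁,u₁) ≠ f(v₂,u₂). Define h₁ = (f(u₁,v₁)+f(u₂,v₂))/2 + μ(u₁−u₂)/(12(−f(v₁,u₁)+f(v₂,u₂))) and h₂ = (−f(u₁,v₁)+f(u₂,v₂))²/4 − μ(u₁+u₂)/12 + μ²(u₁−u₂)²/(144(−f(v₁,u₁)+f(v₂,u₂))²). Then the separated relations (f(v₁,u₁) − h₁)² − μu₁/6 = h₂ and (f(v₂,u₂) − h₁)² − μu₂/6 = h₂ hold. -/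
import Mathlib


/-- `f(v,u) = (96a⁴v² + 27ω³ − 9ω²u − 3ωu² + u³)/(12a²)`. -/
noncomputable def fKK (a ω : ℝ) (v u : ℝ) : ℝ :=
  (96*a^4*v^2 + 27*ω^3 - 9*ω^2*u - 3*ω*u^2 + u^3) / (12*a^2)

lemma KK_aux (μ u₁ u₂ F1 F2 h₁ h₂ : ℝ) (hd : -F1 + F2 ≠ 0)
    (hh₁ : h₁ = (F1 + F2) / 2 + μ * (u₁ - u₂) / (12 * (-F1 + F2)))
    (hh₂ : h₂ = (-F1 + F2)^2 / 4 - μ * (u₁ + u₂) / 12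
        + μ^2 * (u₁ - u₂)^2 / (144 * (-F1 + F2)^2)) :
    (F1 - h₁)^2 - μ * u₁ / 6 = h₂ ∧ (F2 - h₁)^2 - μ * u₂ / 6 = h₂ := by
  subst hh₁ hh₂
  constructor <;> (field_simp; ring)

/-- the Kaup–Kupershmidt Hamiltonians `h₁, h₂` in canonical separated variables
satisfy the separated relations `(f(vᵢ,uᵢ) − h₁)² − μuᵢ/6 = h₂`, `i = 1,2`. -/
theorem KK_separated_relations (a ω μ : ℝ) (ha : a ≠ 0)
    (u₁ u₂ v₁ v₂ : ℝ) (hf : fKK a ω v₁ u₁ ≠ fKK a ω v₂ u₂)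
    (h₁ h₂ : ℝ)
    (hh₁ : h₁ = (fKK a ω v₁ u₁ + fKK a ω v₂ u₂) / 2
        + μ * (u₁ - u₂) / (12 * (-(fKK a ω v₁ u₁) + fKK a ω v₂ u₂)))
    (hh₂ : h₂ = (-(fKK a ω v₁ u₁) + fKK a ω v₂ u₂)^2 / 4
        - μ * (u₁ + u₂) / 12
        + μ^2 * (u₁ - u₂)^2 / (144 * (-(fKK a ω v₁ u₁) + fKK a ω v₂ u₂)^2)) :
    (fKK a ω v₁ u₁ - h₁)^2 - μ * u₁ / 6 = h₂
    ∧ (fKK a ω v₂ u₂ - h₁)^2 - μ * u₂ / 6 = h₂ := by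
  exact KK_aux μ u₁ u₂ _ _ h₁ h₂ (fun h => hf (by linarith [h])) hh₁ hh₂
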